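/- arXiv:2406.11365 — 2 statements merged into one kernel-verified Lean document; each statement's English description precedes it below -/
import Mathlib

section
/- The function S_n : ℝ × ℝⁿ → ℝ, defined by S_n(t,x) = (4πt)^(−n/2)·exp(−‖x‖²/(4t)) for t > 0 and S_n(t,x) = 0 for t ≤ 0, is of class C^∞ on the open set (ℝ × ℝⁿ) \ {(0,0)}. -/
open Real MeasureTheory

/-- The fundamental solution of the heat equation in `ℝⁿ`. -/
noncomputable def Sn (n : ℕ) (t : ℝ) (x : EuclideanSpace ℝ (Fin n)) : ℝ :=
  if 0 < t then (4 * Real.pi * t) ^ (-(n : ℝ) / 2) * Real.exp (-‖x‖ ^ 2 / (4 * t)) else 0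

/-!
Away from `t = 0` the function is either identically zero or given by a smooth formula. Near a
point `(0, x)` with `x ≠ 0`, the parabolic rescaling `s = 4t/‖x‖²` gives
`S_n(t, x) = (π‖x‖²)^(-n/2) · s^(-n/2) e^(-1/s)`, and for every real `c` the function
`s ↦ s^c e^(-1/s)`, extended by `0` to `s ≤ 0`, is smooth: its derivative
`c · s^(c-1) e^(-1/s) + s^(c-2) e^(-1/s)` is a combination of functions of the same kind, so
induction on the order of differentiability applies to all exponents at once.
-/

open Filter Topology

namespace expNegInvGlue

theorem tendsto_rpow_mul_zero (c : ℝ) :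
    Tendsto (fun t ↦ t ^ c * expNegInvGlue t) (𝓝 0) (𝓝 0) := by
  simp only [expNegInvGlue, mul_ite, mul_zero]
  refine tendsto_const_nhds.if ?_
  simp only [not_le]
  refine ((tendsto_rpow_mul_exp_neg_mul_atTop_nhds_zero (-c) 1 one_pos).comp
    tendsto_inv_nhdsGT_zero).congr' ?_
  filter_upwards [self_mem_nhdsWithin] with t (ht : 0 < t)
  simp [Real.rpow_neg ht.le, Real.inv_rpow ht.le]

protected theorem hasDerivAt (t : ℝ) :
    HasDerivAt expNegInvGlue (t⁻¹ ^ 2 * expNegInvGlue t) t := by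
  simpa using hasDerivAt_polynomial_eval_inv_mul 1 t

theorem hasDerivAt_rpow_mul (c t : ℝ) :
    HasDerivAt (fun t ↦ t ^ c * expNegInvGlue t)
      (c * (t ^ (c - 1) * expNegInvGlue t) + t ^ (c - 2) * expNegInvGlue t) t := by
  rcases eq_or_ne t 0 with rfl | ht
  · rw [expNegInvGlue.zero, mul_zero, mul_zero, mul_zero, add_zero, hasDerivAt_iff_tendsto_slope]
    refine ((tendsto_rpow_mul_zero (c - 1)).mono_left inf_le_left).congr fun s ↦ ?_
    rcases eq_or_ne s 0 with rfl | hs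
    · simp [expNegInvGlue.zero]
    · simp [slope_def_field, expNegInvGlue.zero, Real.rpow_sub_one hs, div_mul_eq_mul_div]
  · refine ((Real.hasDerivAt_rpow_const (p := c) (Or.inl ht)).mul
      (expNegInvGlue.hasDerivAt t)).congr_deriv ?_
    rcases le_or_gt t 0 with ht' | ht'
    · simp [zero_of_nonpos ht']
    · rw [Real.rpow_sub_one ht, Real.rpow_sub ht' c 2, Real.rpow_two]
      field_simp

theorem contDiff_rpow_mul {n : ℕ∞} (c : ℝ) :
    ContDiff ℝ n (fun t ↦ t ^ c * expNegInvGlue t) := by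
  apply contDiff_all_iff_nat.2 (fun m ↦ ?_) n
  induction m generalizing c with
  | zero =>
    exact contDiff_zero.2 <| continuous_iff_continuousAt.2 fun t ↦
      (hasDerivAt_rpow_mul c t).continuousAt
  | succ m ihm =>
    rw [show ((m + 1 : ℕ) : WithTop ℕ∞) = m + 1 from rfl]
    refine contDiff_succ_iff_deriv.2
      ⟨fun t ↦ (hasDerivAt_rpow_mul c t).differentiableAt, by simp, ?_⟩
    rw [funext fun t ↦ (hasDerivAt_rpow_mul c t).deriv]
    exact (contDiff_const.mul (ihm (c - 1))).add (ihm (c - 2))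

end expNegInvGlue

section HeatKernel

variable (n : ℕ)

theorem Sn_eq_rpow_mul_rpow_mul_expNegInvGlue {t : ℝ} {x : EuclideanSpace ℝ (Fin n)}
    (hx : x ≠ 0) :
    Sn n t x = (π * ‖x‖ ^ 2) ^ (-(n : ℝ) / 2) *
      ((4 * t / ‖x‖ ^ 2) ^ (-(n : ℝ) / 2) * expNegInvGlue (4 * t / ‖x‖ ^ 2)) := by
  have hx2 : 0 < ‖x‖ ^ 2 := by positivity
  rcases le_or_gt t 0 with ht | ht
  · rw [Sn, if_neg ht.not_gt,
      expNegInvGlue.zero_of_nonpos (div_nonpos_of_nonpos_of_nonneg (by linarith) hx2.le)]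
    simp
  · rw [Sn, if_pos ht, expNegInvGlue, if_neg (by positivity : 0 < 4 * t / ‖x‖ ^ 2).not_ge,
      ← mul_assoc, ← Real.mul_rpow (by positivity) (by positivity), inv_div]
    congr 2 <;> field_simp

theorem contDiffAt_Sn_of_snd_ne_zero {m : ℕ∞} {p : ℝ × EuclideanSpace ℝ (Fin n)}
    (hp : p.2 ≠ 0) : ContDiffAt ℝ m (fun p : ℝ × EuclideanSpace ℝ (Fin n) ↦ Sn n p.1 p.2) p := by
  have hnorm : ContDiff ℝ m (fun q : ℝ × EuclideanSpace ℝ (Fin n) ↦ ‖q.2‖ ^ 2) :=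
    (contDiff_norm_sq ℝ).comp contDiff_snd
  have hp2 : ‖p.2‖ ^ 2 ≠ 0 := by positivity
  have hsmooth : ContDiffAt ℝ m (fun q : ℝ × EuclideanSpace ℝ (Fin n) ↦
      (π * ‖q.2‖ ^ 2) ^ (-(n : ℝ) / 2) * ((4 * q.1 / ‖q.2‖ ^ 2) ^ (-(n : ℝ) / 2) *
        expNegInvGlue (4 * q.1 / ‖q.2‖ ^ 2))) p := by
    refine .mul ?_ ?_
    · exact (Real.contDiffAt_rpow_const_of_ne (by positivity)).comp p
        (contDiff_const.mul hnorm).contDiffAt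
    · exact (expNegInvGlue.contDiff_rpow_mul _).contDiffAt.comp p
        ((contDiff_const.mul contDiff_fst).contDiffAt.div hnorm.contDiffAt hp2)
  refine hsmooth.congr_of_eventuallyEq ?_
  filter_upwards [(isOpen_ne.preimage continuous_snd).mem_nhds hp] with q hq
  exact Sn_eq_rpow_mul_rpow_mul_expNegInvGlue n hq

theorem contDiffAt_Sn_of_fst_ne_zero {m : ℕ∞} {p : ℝ × EuclideanSpace ℝ (Fin n)}
    (hp : p.1 ≠ 0) : ContDiffAt ℝ m (fun p : ℝ × EuclideanSpace ℝ (Fin n) ↦ Sn n p.1 p.2) p := by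
  rcases hp.lt_or_gt with hp | hp
  · refine (contDiffAt_const (c := (0 : ℝ))).congr_of_eventuallyEq ?_
    filter_upwards [(isOpen_Iio.preimage continuous_fst).mem_nhds hp] with q (hq : q.1 < 0)
    exact if_neg hq.not_gt
  · have hsmooth : ContDiffAt ℝ m (fun q : ℝ × EuclideanSpace ℝ (Fin n) ↦
        (4 * π * q.1) ^ (-(n : ℝ) / 2) * exp (-‖q.2‖ ^ 2 / (4 * q.1))) p := by
      refine .mul ?_ ?_
      · exact (Real.contDiffAt_rpow_const_of_ne (by positivity)).comp p
          (contDiff_const.mul contDiff_fst).contDiffAt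
      · exact Real.contDiff_exp.contDiffAt.comp p
          ((((contDiff_norm_sq ℝ).comp contDiff_snd).neg.contDiffAt).div
            (contDiff_const.mul contDiff_fst).contDiffAt (by positivity))
    refine hsmooth.congr_of_eventuallyEq ?_
    filter_upwards [(isOpen_Ioi.preimage continuous_fst).mem_nhds hp] with q (hq : 0 < q.1)
    exact if_pos hq

end HeatKernel

theorem Sn_contDiffOn_general (n : ℕ) :
    ContDiffOn ℝ (⊤ : ℕ∞) (fun p : ℝ × EuclideanSpace ℝ (Fin n) => Sn n p.1 p.2)
      {p : ℝ × EuclideanSpace ℝ (Fin n) | p ≠ (0, 0)} := by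
  intro p hp
  by_cases hx : p.2 = 0
  · have ht : p.1 ≠ 0 := fun ht ↦ hp (Prod.ext ht hx)
    exact (contDiffAt_Sn_of_fst_ne_zero n ht).contDiffWithinAt
  · exact (contDiffAt_Sn_of_snd_ne_zero n hx).contDiffWithinAt

/-- The fundamental solution `S_n` is of class `C^∞` on `(ℝ × ℝⁿ) \ {(0,0)}`. -/
theorem Sn_contDiffOn (n : ℕ) (hn : 2 ≤ n) :
    ContDiffOn ℝ (⊤ : ℕ∞) (fun p : ℝ × EuclideanSpace ℝ (Fin n) => Sn n p.1 p.2)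
      {p : ℝ × EuclideanSpace ℝ (Fin n) | p ≠ (0, 0)} :=
  Sn_contDiffOn_general n
end

section
/- Assume σ is upper (n−1)-Ahlfors regular with constant c. Then for every (t,x) ∈ [0,T] × ℝⁿ the integral defining v[μ](t,x) converges absolutely, and the single layer heat potential v[μ] is bounded and continuous on all of [0,T] × ℝⁿ (including across the support K), with v[μ](0,x) = 0 for every x ∈ ℝⁿ. -/
open Real MeasureTheory

/-- The single layer heat potential `v[μ](t,x) = ∫₀ᵗ ∫ S_n(t−τ, x−y) μ(τ,y) dσ(y) dτ`. -/
noncomputable def singleLayer (n : ℕ) (σ : Measure (EuclideanSpace ℝ (Fin n)))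
    (μ : ℝ → EuclideanSpace ℝ (Fin n) → ℝ) (t : ℝ) (x : EuclideanSpace ℝ (Fin n)) : ℝ :=
  ∫ τ in Set.Ioc (0 : ℝ) t, ∫ y, Sn n (t - τ) (x - y) * μ τ y ∂σ

/-!
Upper Ahlfors regularity, summed over the annuli `k √s ≤ ‖x - y‖ < (k + 1) √s`, gives
`∫ S_n(s, x - y) dσ(y) ≤ C s^{-1/2}` uniformly in `x`: the mass `≤ c ((k + 1) √s)^{n-1}` of the
`k`-th annulus turns the factor `s^{-n/2}` into `s^{-1/2}`, and the Gaussian weight `e^{-k²/4}`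
makes the sum over `k` converge. So the time slice `w(t, x, τ) = ∫ S_n(t - τ, x - y) μ(τ, y) dσ(y)`
has the integrable singularity `O((t - τ)^{-1/2})`, whence `|v[μ](t, x)| ≤ 2 M C √t`. For continuity at `(t₀, x₀)`,
`v[μ]` differs near `(t₀, x₀)` by `O(√d)`, uniformly, from the integral of `w` over `τ ≤ t₀ - d`;
that integral is continuous by dominated convergence, since each slice with `τ < t` is.
-/

open Set Filter Topology

section SingularIntegral

lemma integrableOn_sub_rpow_neg_half (t a b : ℝ) :
    IntegrableOn (fun τ : ℝ => (t - τ) ^ (-(1 : ℝ) / 2)) (Ioc a b) := by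
  rcases le_total a b with hab | hba
  · have h := ((intervalIntegral.intervalIntegrable_rpow' (a := t - a) (b := t - b)
      (r := -(1:ℝ)/2) (by norm_num)).comp_sub_left t)
    simp only [sub_sub_cancel] at h
    exact (intervalIntegrable_iff_integrableOn_Ioc_of_le hab).1 h
  · simp [Ioc_eq_empty_of_le hba]

lemma integral_sub_rpow_neg_half {a t : ℝ} (hat : a ≤ t) :
    ∫ τ in Ioc a t, (t - τ) ^ (-(1 : ℝ) / 2) = 2 * √(t - a) := by
  rw [← intervalIntegral.integral_of_le hat, intervalIntegral.integral_comp_sub_left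
    (fun s : ℝ => s ^ (-(1 : ℝ) / 2)), sub_self, integral_rpow (Or.inl (by norm_num)),
    sqrt_eq_rpow, zero_rpow (by norm_num)]
  norm_num
  ring

variable {E : Type*} [NormedAddCommGroup E]

lemma integrableOn_Ioc_of_norm_le_rpow {f : ℝ → E} {a t B : ℝ} (hf_meas : AEStronglyMeasurable f)
    (hf : ∀ τ < t, ‖f τ‖ ≤ B * (t - τ) ^ (-(1 : ℝ) / 2)) : IntegrableOn f (Ioc a t) := by
  rw [integrableOn_Ioc_iff_integrableOn_Ioo]
  refine Integrable.mono' (IntegrableOn.mono_set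
    ((integrableOn_sub_rpow_neg_half t a t).const_mul B) Ioo_subset_Ioc_self) hf_meas.restrict ?_
  exact (ae_restrict_iff' measurableSet_Ioo).2 (ae_of_all _ fun τ hτ => hf τ hτ.2)

variable [NormedSpace ℝ E]

lemma norm_setIntegral_Ioc_le_of_norm_le_rpow {f : ℝ → E} {a t B : ℝ} (hat : a ≤ t)
    (hf : ∀ τ < t, ‖f τ‖ ≤ B * (t - τ) ^ (-(1 : ℝ) / 2)) :
    ‖∫ τ in Ioc a t, f τ‖ ≤ 2 * B * √(t - a) := by
  have hint : IntegrableOn (fun τ => B * (t - τ) ^ (-(1 : ℝ) / 2)) (Ioo a t) :=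
    IntegrableOn.mono_set ((integrableOn_sub_rpow_neg_half t a t).const_mul B) Ioo_subset_Ioc_self
  calc ‖∫ τ in Ioc a t, f τ‖ = ‖∫ τ in Ioo a t, f τ‖ := by rw [integral_Ioc_eq_integral_Ioo]
    _ ≤ ∫ τ in Ioo a t, B * (t - τ) ^ (-(1 : ℝ) / 2) :=
      norm_integral_le_of_norm_le hint
        ((ae_restrict_iff' measurableSet_Ioo).2 (ae_of_all _ fun τ hτ => hf τ hτ.2))
    _ = 2 * B * √(t - a) := by
      rw [← integral_Ioc_eq_integral_Ioo, integral_const_mul, integral_sub_rpow_neg_half hat]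
      ring

lemma norm_setIntegral_Ioc_sub_le {f : ℝ → E} {a b t B : ℝ} (hB : 0 ≤ B) (hbt : b ≤ t)
    (hf_int : IntegrableOn f (Ioc a t)) (hf : ∀ τ < t, ‖f τ‖ ≤ B * (t - τ) ^ (-(1 : ℝ) / 2)) :
    ‖(∫ τ in Ioc a t, f τ) - ∫ τ in Ioc a b, f τ‖ ≤ 2 * B * √(t - b) := by
  rcases le_total a b with hab | hba
  · rw [← Ioc_union_Ioc_eq_Ioc hab hbt, setIntegral_union (Ioc_disjoint_Ioc_of_le le_rfl)
      measurableSet_Ioc (hf_int.mono_set (Ioc_subset_Ioc_right hbt))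
      (hf_int.mono_set (Ioc_subset_Ioc_left hab)), add_sub_cancel_left]
    exact norm_setIntegral_Ioc_le_of_norm_le_rpow hbt hf
  · rw [Ioc_eq_empty_of_le hba, setIntegral_empty, sub_zero]
    rcases le_total a t with hat | hta
    · refine (norm_setIntegral_Ioc_le_of_norm_le_rpow hat hf).trans ?_
      gcongr
    · rw [Ioc_eq_empty_of_le hta, setIntegral_empty, norm_zero]
      positivity

variable {X : Type*} [TopologicalSpace X] [FirstCountableTopology X] {F : ℝ → X → ℝ → E} {B : ℝ}

lemma continuousAt_setIntegral_Ioc_of_lt (a : ℝ) (hB : 0 ≤ B)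
    (hF_meas : ∀ t x, AEStronglyMeasurable (F t x))
    (hF : ∀ t x, ∀ τ < t, ‖F t x τ‖ ≤ B * (t - τ) ^ (-(1 : ℝ) / 2))
    (hF_cont : ∀ t x, ∀ τ < t, ContinuousAt (fun p : ℝ × X => F p.1 p.2 τ) (t, x))
    {t₀ b : ℝ} (x₀ : X) (hb : b < t₀) :
    ContinuousAt (fun p : ℝ × X => ∫ τ in Ioc a b, F p.1 p.2 τ) (t₀, x₀) := by
  set δ := (t₀ - b) / 2
  have hδ : 0 < δ := by simp only [δ]; linarith
  refine continuousAt_of_dominated (bound := fun _ => B * δ ^ (-(1 : ℝ) / 2))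
    (Eventually.of_forall fun p => (hF_meas p.1 p.2).restrict) ?_ (integrableOn_const (by simp)) ?_
  · filter_upwards [continuousAt_fst.eventually (lt_mem_nhds (show b + δ < t₀ by
      simp only [δ]; linarith))] with p hp
    refine (ae_restrict_iff' measurableSet_Ioc).2 (ae_of_all _ fun τ hτ => ?_)
    refine (hF p.1 p.2 τ (by linarith [hτ.2])).trans (mul_le_mul_of_nonneg_left ?_ hB)
    exact rpow_le_rpow_of_nonpos hδ (by linarith [hτ.2]) (by norm_num)
  · exact (ae_restrict_iff' measurableSet_Ioc).2
      (ae_of_all _ fun τ hτ => hF_cont t₀ x₀ τ (hτ.2.trans_lt hb))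

theorem continuous_setIntegral_Ioc_of_norm_le_rpow (a : ℝ) (hB : 0 ≤ B)
    (hF_meas : ∀ t x, AEStronglyMeasurable (F t x))
    (hF : ∀ t x, ∀ τ < t, ‖F t x τ‖ ≤ B * (t - τ) ^ (-(1 : ℝ) / 2))
    (hF_cont : ∀ t x, ∀ τ < t, ContinuousAt (fun p : ℝ × X => F p.1 p.2 τ) (t, x)) :
    Continuous (fun p : ℝ × X => ∫ τ in Ioc a p.1, F p.1 p.2 τ) := by
  refine continuous_iff_continuousAt.2 fun ⟨t₀, x₀⟩ =>
    continuousAt_of_locally_uniform_approx_of_continuousAt fun u hu => ?_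
  obtain ⟨ε, hε, hεu⟩ := Metric.mem_uniformity_dist.1 hu
  have htail : Tendsto (fun d => 2 * B * √(2 * d)) (𝓝[>] 0) (𝓝 0) :=
    ((by fun_prop : Continuous fun d : ℝ => 2 * B * √(2 * d)).tendsto' 0 0 (by simp)).mono_left
      nhdsWithin_le_nhds
  obtain ⟨d, hdε, hd⟩ := ((htail.eventually (gt_mem_nhds hε)).and self_mem_nhdsWithin).exists
  refine ⟨{p | |p.1 - t₀| < d},
    (continuous_fst.sub continuous_const).abs.continuousAt.preimage_mem_nhds
      (gt_mem_nhds (by simpa using hd)), fun p => ∫ τ in Ioc a (t₀ - d), F p.1 p.2 τ,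
    continuousAt_setIntegral_Ioc_of_lt a hB hF_meas hF hF_cont x₀ (by linarith),
    fun p (hp : |p.1 - t₀| < d) => hεu ?_⟩
  obtain ⟨hp₁, hp₂⟩ := abs_lt.1 hp
  rw [dist_eq_norm]
  calc ‖(∫ τ in Ioc a p.1, F p.1 p.2 τ) - ∫ τ in Ioc a (t₀ - d), F p.1 p.2 τ‖
      ≤ 2 * B * √(p.1 - (t₀ - d)) := norm_setIntegral_Ioc_sub_le hB (by linarith)
        (integrableOn_Ioc_of_norm_le_rpow (hF_meas _ _) (hF _ _)) (hF _ _)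
    _ ≤ 2 * B * √(2 * d) := by gcongr; linarith
    _ < ε := hdε

end SingularIntegral

section Ahlfors

variable {α : Type*} [PseudoMetricSpace α] [MeasurableSpace α]

def IsUpperAhlforsRegular (σ : Measure α) (c : ℝ) (d : ℕ) : Prop :=
  ∀ (x : α) (r : ℝ), 0 < r → σ (Metric.closedBall x r) ≤ ENNReal.ofReal (c * r ^ d)

noncomputable def gaussAnnulusSum (d : ℕ) : ℝ :=
  ∑' k : ℕ, ((k : ℝ) + 1) ^ d * exp (-(k : ℝ) ^ 2 / 4)

lemma summable_gaussAnnulus (d : ℕ) :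
    Summable fun k : ℕ => ((k : ℝ) + 1) ^ d * exp (-(k : ℝ) ^ 2 / 4) := by
  have h : Summable fun k : ℕ => ((k + 1 : ℕ) : ℝ) ^ d * exp (-(1 / 4) * ((k + 1 : ℕ) : ℝ)) :=
    (summable_nat_add_iff 1).2 (summable_pow_mul_exp_neg_nat_mul d (by norm_num))
  refine (h.mul_left (exp (1 / 4))).of_nonneg_of_le (fun k => by positivity) fun k => ?_
  rw [mul_left_comm, ← exp_add]
  push_cast
  have hk : (k : ℝ) ≤ (k : ℝ) ^ 2 := by exact_mod_cast Nat.le_self_pow two_ne_zero k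
  gcongr
  linarith

lemma IsUpperAhlforsRegular.lintegral_exp_neg_dist_sq_le [OpensMeasurableSpace α] {σ : Measure α}
    {c : ℝ} {d : ℕ} (hσ : IsUpperAhlforsRegular σ c d) (hc : 0 ≤ c) (x : α) {s : ℝ} (hs : 0 < s) :
    ∫⁻ y, ENNReal.ofReal (exp (-dist x y ^ 2 / (4 * s))) ∂σ
      ≤ ENNReal.ofReal (c * gaussAnnulusSum d * √s ^ d) := by
  have hs' : 0 < √s := sqrt_pos.2 hs
  set ball : ℕ → Set α := fun k => Metric.closedBall x ((k + 1) * √s)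
  have hball : ∀ k, MeasurableSet (ball k) := fun k => Metric.isClosed_closedBall.measurableSet
  -- A point at distance between `k √s` and `(k + 1) √s` from `x` contributes at most `e^{-k²/4}`.
  have hpoint : ∀ y, ENNReal.ofReal (exp (-dist x y ^ 2 / (4 * s)))
      ≤ ∑' k : ℕ, (ball k).indicator (fun _ => ENNReal.ofReal (exp (-(k : ℝ) ^ 2 / 4))) y := by
    intro y
    set k := ⌊dist x y / √s⌋₊
    have hk : k * √s ≤ dist x y := (le_div_iff₀ hs').1 (Nat.floor_le (by positivity))
    have hk' : dist x y ≤ (k + 1) * √s := ((div_lt_iff₀ hs').1 (Nat.lt_floor_add_one _)).le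
    refine le_trans ?_ (ENNReal.le_tsum k)
    rw [indicator_of_mem (Metric.mem_closedBall'.2 hk')]
    have hsq : (k : ℝ) ^ 2 * s ≤ dist x y ^ 2 :=
      calc (k : ℝ) ^ 2 * s = (k * √s) ^ 2 := by rw [mul_pow, sq_sqrt hs.le]
        _ ≤ dist x y ^ 2 := by gcongr
    refine ENNReal.ofReal_le_ofReal (exp_le_exp.2 ?_)
    rw [div_le_div_iff₀ (by positivity) (by norm_num)]
    nlinarith
  have hterm : ∀ k : ℕ, ENNReal.ofReal (exp (-(k : ℝ) ^ 2 / 4)) * σ (ball k)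
      ≤ ENNReal.ofReal (c * √s ^ d * (((k : ℝ) + 1) ^ d * exp (-(k : ℝ) ^ 2 / 4))) := by
    intro k
    calc _ ≤ ENNReal.ofReal (exp (-(k : ℝ) ^ 2 / 4)) * ENNReal.ofReal (c * ((k + 1) * √s) ^ d) := by
          gcongr; exact hσ x _ (by positivity)
      _ = _ := by rw [← ENNReal.ofReal_mul (exp_nonneg _), mul_pow]; congr 1; ring
  calc ∫⁻ y, ENNReal.ofReal (exp (-dist x y ^ 2 / (4 * s))) ∂σ
      ≤ ∫⁻ y, ∑' k : ℕ,
          (ball k).indicator (fun _ => ENNReal.ofReal (exp (-(k : ℝ) ^ 2 / 4))) y ∂σ :=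
        lintegral_mono hpoint
    _ = ∑' k : ℕ, ENNReal.ofReal (exp (-(k : ℝ) ^ 2 / 4)) * σ (ball k) := by
        rw [lintegral_tsum fun k => (measurable_const.indicator (hball k)).aemeasurable]
        simp_rw [lintegral_indicator_const (hball _)]
    _ ≤ ∑' k : ℕ, ENNReal.ofReal (c * √s ^ d * (((k : ℝ) + 1) ^ d * exp (-(k : ℝ) ^ 2 / 4))) :=
        ENNReal.tsum_le_tsum hterm
    _ = ENNReal.ofReal (c * gaussAnnulusSum d * √s ^ d) := by
        rw [← ENNReal.ofReal_tsum_of_nonneg (fun k => by positivity)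
          ((summable_gaussAnnulus d).mul_left _), tsum_mul_left, gaussAnnulusSum]
        congr 1; ring

end Ahlfors

section HeatKernel

variable {n : ℕ}

lemma Sn_of_pos {t : ℝ} (ht : 0 < t) (x : EuclideanSpace ℝ (Fin n)) :
    Sn n t x = (4 * π * t) ^ (-(n : ℝ) / 2) * exp (-‖x‖ ^ 2 / (4 * t)) :=
  if_pos ht

lemma Sn_of_nonpos {t : ℝ} (ht : t ≤ 0) (x : EuclideanSpace ℝ (Fin n)) : Sn n t x = 0 :=
  if_neg ht.not_gt

lemma Sn_nonneg (t : ℝ) (x : EuclideanSpace ℝ (Fin n)) : 0 ≤ Sn n t x := by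
  rcases le_or_gt t 0 with ht | ht
  · rw [Sn_of_nonpos ht]
  · rw [Sn_of_pos ht]; positivity

lemma Sn_le_rpow {s s' : ℝ} (hs' : 0 < s') (hss' : s' ≤ s) (x : EuclideanSpace ℝ (Fin n)) :
    Sn n s x ≤ (4 * π * s') ^ (-(n : ℝ) / 2) := by
  have hs : 0 < s := hs'.trans_le hss'
  rw [Sn_of_pos hs]
  calc (4 * π * s) ^ (-(n : ℝ) / 2) * exp (-‖x‖ ^ 2 / (4 * s))
      ≤ (4 * π * s) ^ (-(n : ℝ) / 2) * 1 := by
        refine mul_le_mul_of_nonneg_left (exp_le_one_iff.2 ?_) (by positivity)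
        exact div_nonpos_of_nonpos_of_nonneg (neg_nonpos.2 (by positivity)) (by positivity)
    _ ≤ (4 * π * s') ^ (-(n : ℝ) / 2) := by
        rw [mul_one]
        exact rpow_le_rpow_of_nonpos (by positivity) (by gcongr)
          (by rw [neg_div, neg_nonpos]; positivity)

lemma measurable_Sn : Measurable fun p : ℝ × EuclideanSpace ℝ (Fin n) => Sn n p.1 p.2 :=
  Measurable.ite (measurableSet_lt measurable_const measurable_fst) (by fun_prop) measurable_const

lemma continuousAt_Sn {q : ℝ × EuclideanSpace ℝ (Fin n)} (hq : 0 < q.1) :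
    ContinuousAt (fun p : ℝ × EuclideanSpace ℝ (Fin n) => Sn n p.1 p.2) q := by
  have heq : (fun p : ℝ × EuclideanSpace ℝ (Fin n) =>
      (4 * π * p.1) ^ (-(n : ℝ) / 2) * exp (-‖p.2‖ ^ 2 / (4 * p.1))) =ᶠ[𝓝 q]
      fun p => Sn n p.1 p.2 := by
    filter_upwards [continuousAt_fst.eventually (lt_mem_nhds hq)] with p hp
    rw [Sn_of_pos hp]
  refine ContinuousAt.congr ?_ heq
  fun_prop (disch := first | positivity | exact Or.inl (by positivity) | simpa using hq.ne')

lemma rpow_neg_div_two_mul_sqrt_pow {s : ℝ} (hs : 0 < s) (hn : 1 ≤ n) :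
    s ^ (-(n : ℝ) / 2) * √s ^ (n - 1) = s ^ (-(1 : ℝ) / 2) := by
  rw [sqrt_eq_rpow, ← rpow_natCast, ← rpow_mul hs.le, ← rpow_add hs, Nat.cast_sub hn]
  congr 1
  push_cast
  ring

lemma IsUpperAhlforsRegular.exists_lintegral_Sn_le (hn : 1 ≤ n)
    {σ : Measure (EuclideanSpace ℝ (Fin n))} {c : ℝ} (hσ : IsUpperAhlforsRegular σ c (n - 1))
    (hc : 0 ≤ c) : ∃ C, 0 ≤ C ∧ ∀ x s, 0 < s →
      ∫⁻ y, ENNReal.ofReal (Sn n s (x - y)) ∂σ ≤ ENNReal.ofReal (C * s ^ (-(1 : ℝ) / 2)) := by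
  refine ⟨(4 * π) ^ (-(n : ℝ) / 2) * (c * gaussAnnulusSum (n - 1)),
    mul_nonneg (by positivity) (mul_nonneg hc (tsum_nonneg fun k => by positivity)),
    fun x s hs => ?_⟩
  have hK : 0 ≤ (4 * π * s) ^ (-(n : ℝ) / 2) := by positivity
  calc ∫⁻ y, ENNReal.ofReal (Sn n s (x - y)) ∂σ
      = ENNReal.ofReal ((4 * π * s) ^ (-(n : ℝ) / 2)) *
          ∫⁻ y, ENNReal.ofReal (exp (-dist x y ^ 2 / (4 * s))) ∂σ := by
        rw [← lintegral_const_mul' _ _ ENNReal.ofReal_ne_top]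
        simp_rw [← ENNReal.ofReal_mul hK, Sn_of_pos hs, dist_eq_norm]
    _ ≤ ENNReal.ofReal ((4 * π * s) ^ (-(n : ℝ) / 2)) *
          ENNReal.ofReal (c * gaussAnnulusSum (n - 1) * √s ^ (n - 1)) := by
        gcongr
        exact hσ.lintegral_exp_neg_dist_sq_le hc x hs
    _ = _ := by
        rw [← ENNReal.ofReal_mul hK, mul_rpow (by positivity) hs.le,
          ← rpow_neg_div_two_mul_sqrt_pow hs hn]
        congr 1; ring

end HeatKernel

noncomputable def singleLayerSlice (n : ℕ) (σ : Measure (EuclideanSpace ℝ (Fin n)))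
    (μ : ℝ → EuclideanSpace ℝ (Fin n) → ℝ) (t : ℝ) (x : EuclideanSpace ℝ (Fin n)) (τ : ℝ) : ℝ :=
  ∫ y, Sn n (t - τ) (x - y) * μ τ y ∂σ

section SingleLayer

variable {n : ℕ} {σ : Measure (EuclideanSpace ℝ (Fin n))}
  {μ : ℝ → EuclideanSpace ℝ (Fin n) → ℝ} {M C : ℝ}

lemma measurable_Sn_sub_mul (hμ_meas : Measurable (Function.uncurry μ)) (t : ℝ)
    (x : EuclideanSpace ℝ (Fin n)) :
    Measurable fun p : ℝ × EuclideanSpace ℝ (Fin n) => Sn n (t - p.1) (x - p.2) * μ p.1 p.2 :=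
  (measurable_Sn.comp ((measurable_const.sub measurable_fst).prodMk
    (measurable_const.sub measurable_snd))).mul hμ_meas

lemma lintegral_norm_Sn_mul_le (hμ : ∀ t y, |μ t y| ≤ M)
    (hS : ∀ x s, 0 < s →
      ∫⁻ y, ENNReal.ofReal (Sn n s (x - y)) ∂σ ≤ ENNReal.ofReal (C * s ^ (-(1 : ℝ) / 2)))
    (t : ℝ) (x : EuclideanSpace ℝ (Fin n)) (τ : ℝ) :
    ∫⁻ y, ENNReal.ofReal ‖Sn n (t - τ) (x - y) * μ τ y‖ ∂σ
      ≤ ENNReal.ofReal (M * C * (t - τ) ^ (-(1 : ℝ) / 2)) := by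
  rcases le_or_gt (t - τ) 0 with hτ | hτ
  · simp [Sn_of_nonpos hτ]
  have hM : 0 ≤ M := (abs_nonneg _).trans (hμ 0 0)
  calc ∫⁻ y, ENNReal.ofReal ‖Sn n (t - τ) (x - y) * μ τ y‖ ∂σ
      ≤ ∫⁻ y, ENNReal.ofReal (Sn n (t - τ) (x - y)) * ENNReal.ofReal M ∂σ := by
        refine lintegral_mono fun y => ?_
        rw [← ENNReal.ofReal_mul (Sn_nonneg _ _), norm_mul, norm_of_nonneg (Sn_nonneg _ _)]
        exact ENNReal.ofReal_le_ofReal (mul_le_mul_of_nonneg_left (hμ τ y) (Sn_nonneg _ _))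
    _ ≤ ENNReal.ofReal (C * (t - τ) ^ (-(1 : ℝ) / 2)) * ENNReal.ofReal M := by
        rw [lintegral_mul_const' _ _ ENNReal.ofReal_ne_top]
        exact mul_le_mul_left (hS x _ hτ) _
    _ = ENNReal.ofReal (M * C * (t - τ) ^ (-(1 : ℝ) / 2)) := by
        rw [← ENNReal.ofReal_mul' hM]
        congr 1; ring

lemma norm_singleLayerSlice_le (hμ : ∀ t y, |μ t y| ≤ M) (hC : 0 ≤ C)
    (hS : ∀ x s, 0 < s →
      ∫⁻ y, ENNReal.ofReal (Sn n s (x - y)) ∂σ ≤ ENNReal.ofReal (C * s ^ (-(1 : ℝ) / 2)))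
    (t : ℝ) (x : EuclideanSpace ℝ (Fin n)) (τ : ℝ) (hτ : τ < t) :
    ‖singleLayerSlice n σ μ t x τ‖ ≤ M * C * (t - τ) ^ (-(1 : ℝ) / 2) := by
  have hM : 0 ≤ M := (abs_nonneg _).trans (hμ 0 0)
  refine (norm_integral_le_lintegral_norm _).trans (ENNReal.toReal_le_of_le_ofReal ?_
    (lintegral_norm_Sn_mul_le hμ hS t x τ))
  have : 0 ≤ (t - τ) ^ (-(1 : ℝ) / 2) := rpow_nonneg (by linarith) _
  positivity

lemma stronglyMeasurable_singleLayerSlice [SFinite σ] (hμ_meas : Measurable (Function.uncurry μ))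
    (t : ℝ) (x : EuclideanSpace ℝ (Fin n)) : StronglyMeasurable (singleLayerSlice n σ μ t x) :=
  (measurable_Sn_sub_mul hμ_meas t x).stronglyMeasurable.integral_prod_right'

lemma continuousAt_singleLayerSlice [IsFiniteMeasure σ] (hμ_meas : Measurable (Function.uncurry μ))
    (hμ : ∀ t y, |μ t y| ≤ M) (t : ℝ) (x : EuclideanSpace ℝ (Fin n)) (τ : ℝ) (hτ : τ < t) :
    ContinuousAt (fun p : ℝ × EuclideanSpace ℝ (Fin n) => singleLayerSlice n σ μ p.1 p.2 τ)
      (t, x) := by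
  set δ := (t - τ) / 2
  have hδ : 0 < δ := by simp only [δ]; linarith
  refine continuousAt_of_dominated (bound := fun _ => (4 * π * δ) ^ (-(n : ℝ) / 2) * M)
    (Eventually.of_forall fun p => ?_) ?_ (integrable_const _) (ae_of_all _ fun y => ?_)
  · exact ((measurable_Sn_sub_mul hμ_meas p.1 p.2).comp measurable_prodMk_left).aestronglyMeasurable
  · filter_upwards [continuousAt_fst.eventually (lt_mem_nhds (show τ + δ < t by
      simp only [δ]; linarith))] with p hp
    refine ae_of_all _ fun y => ?_
    rw [norm_mul, norm_of_nonneg (Sn_nonneg _ _), Real.norm_eq_abs]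
    exact mul_le_mul (Sn_le_rpow hδ (by linarith) _) (hμ τ y) (abs_nonneg _) (by positivity)
  · refine ContinuousAt.mul ?_ continuousAt_const
    exact (continuousAt_Sn (q := (t - τ, x - y)) (sub_pos.2 hτ)).comp_of_eq
      (f := fun p : ℝ × EuclideanSpace ℝ (Fin n) => (p.1 - τ, p.2 - y)) (by fun_prop) rfl

lemma integrableOn_Sn_sub_mul [SFinite σ] (hμ_meas : Measurable (Function.uncurry μ))
    (hμ : ∀ t y, |μ t y| ≤ M)
    (hS : ∀ x s, 0 < s →
      ∫⁻ y, ENNReal.ofReal (Sn n s (x - y)) ∂σ ≤ ENNReal.ofReal (C * s ^ (-(1 : ℝ) / 2)))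
    (t : ℝ) (x : EuclideanSpace ℝ (Fin n)) :
    IntegrableOn (fun p : ℝ × EuclideanSpace ℝ (Fin n) => Sn n (t - p.1) (x - p.2) * μ p.1 p.2)
      (Ioc 0 t ×ˢ univ) (volume.prod σ) := by
  have hmeas := measurable_Sn_sub_mul hμ_meas t x
  rw [IntegrableOn, ← Measure.prod_restrict, Measure.restrict_univ]
  refine ⟨hmeas.aestronglyMeasurable, ?_⟩
  rw [hasFiniteIntegral_iff_norm, lintegral_prod _ hmeas.norm.ennreal_ofReal.aemeasurable]
  calc ∫⁻ τ in Ioc 0 t, ∫⁻ y, ENNReal.ofReal ‖Sn n (t - τ) (x - y) * μ τ y‖ ∂σ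
      ≤ ∫⁻ τ in Ioc 0 t, ENNReal.ofReal (M * C * (t - τ) ^ (-(1 : ℝ) / 2)) :=
        lintegral_mono fun τ => lintegral_norm_Sn_mul_le hμ hS t x τ
    _ < ⊤ := ((integrableOn_sub_rpow_neg_half t 0 t).const_mul (M * C)).lintegral_lt_top

end SingleLayer

theorem singleLayer_continuous_everywhere_general (n : ℕ) (hn : 2 ≤ n) (T : ℝ)
    (σ : Measure (EuclideanSpace ℝ (Fin n))) [IsFiniteMeasure σ]
    (μ : ℝ → EuclideanSpace ℝ (Fin n) → ℝ)
    (hμmeas : Measurable (Function.uncurry μ))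
    (M : ℝ) (hμbd : ∀ t x, |μ t x| ≤ M)
    (c : ℝ) (hc : 0 < c)
    (hAhlfors : ∀ (x : EuclideanSpace ℝ (Fin n)) (r : ℝ), 0 < r →
      σ (Metric.closedBall x r) ≤ ENNReal.ofReal (c * r ^ (n - 1))) :
    (∀ t ∈ Set.Icc (0 : ℝ) T, ∀ x : EuclideanSpace ℝ (Fin n),
      IntegrableOn
        (fun p : ℝ × EuclideanSpace ℝ (Fin n) => Sn n (t - p.1) (x - p.2) * μ p.1 p.2)
        (Set.Ioc (0 : ℝ) t ×ˢ (Set.univ : Set (EuclideanSpace ℝ (Fin n))))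
        ((volume : Measure ℝ).prod σ)) ∧
    (∃ C : ℝ, ∀ t ∈ Set.Icc (0 : ℝ) T, ∀ x : EuclideanSpace ℝ (Fin n),
      |singleLayer n σ μ t x| ≤ C) ∧
    ContinuousOn (fun p : ℝ × EuclideanSpace ℝ (Fin n) => singleLayer n σ μ p.1 p.2)
      (Set.Icc (0 : ℝ) T ×ˢ (Set.univ : Set (EuclideanSpace ℝ (Fin n)))) ∧
    (∀ x : EuclideanSpace ℝ (Fin n), singleLayer n σ μ 0 x = 0) := by
  obtain ⟨C, hC, hS⟩ := IsUpperAhlforsRegular.exists_lintegral_Sn_le (by omega) hAhlfors hc.le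
  have hM : 0 ≤ M := (abs_nonneg _).trans (hμbd 0 0)
  have hslice := norm_singleLayerSlice_le (σ := σ) hμbd hC hS
  refine ⟨fun t _ x => integrableOn_Sn_sub_mul hμmeas hμbd hS t x,
    ⟨2 * (M * C) * √T, fun t ht x => ?_⟩, ?_, fun x => by simp [singleLayer]⟩
  · calc |singleLayer n σ μ t x| ≤ 2 * (M * C) * √(t - 0) :=
          norm_setIntegral_Ioc_le_of_norm_le_rpow ht.1 (hslice t x)
      _ ≤ 2 * (M * C) * √T := by gcongr; linarith [ht.2]
  · exact (continuous_setIntegral_Ioc_of_norm_le_rpow 0 (by positivity)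
      (fun t x => (stronglyMeasurable_singleLayerSlice hμmeas t x).aestronglyMeasurable)
      hslice (continuousAt_singleLayerSlice hμmeas hμbd)).continuousOn

/-- If `σ` is upper `(n−1)`-Ahlfors regular, then the single layer heat potential is given by an
absolutely convergent integral at every point of `[0,T] × ℝⁿ`, it is bounded and continuous on
all of `[0,T] × ℝⁿ` (including across the support `K`), and it vanishes at `t = 0`. -/
theorem singleLayer_continuous_everywhere (n : ℕ) (hn : 2 ≤ n) (T : ℝ) (hT : 0 < T)
    (σ : Measure (EuclideanSpace ℝ (Fin n))) [IsFiniteMeasure σ]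
    (K : Set (EuclideanSpace ℝ (Fin n))) (hK : IsCompact K)
    (hKsupp : K = {x | ∀ U : Set (EuclideanSpace ℝ (Fin n)), IsOpen U → x ∈ U → σ U ≠ 0})
    (μ : ℝ → EuclideanSpace ℝ (Fin n) → ℝ)
    (hμmeas : Measurable (Function.uncurry μ))
    (M : ℝ) (hμbd : ∀ t x, |μ t x| ≤ M)
    (c : ℝ) (hc : 0 < c)
    (hAhlfors : ∀ (x : EuclideanSpace ℝ (Fin n)) (r : ℝ), 0 < r →
      σ (Metric.closedBall x r) ≤ ENNReal.ofReal (c * r ^ (n - 1))) :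
    (∀ t ∈ Set.Icc (0 : ℝ) T, ∀ x : EuclideanSpace ℝ (Fin n),
      IntegrableOn
        (fun p : ℝ × EuclideanSpace ℝ (Fin n) => Sn n (t - p.1) (x - p.2) * μ p.1 p.2)
        (Set.Ioc (0 : ℝ) t ×ˢ (Set.univ : Set (EuclideanSpace ℝ (Fin n))))
        ((volume : Measure ℝ).prod σ)) ∧
    (∃ C : ℝ, ∀ t ∈ Set.Icc (0 : ℝ) T, ∀ x : EuclideanSpace ℝ (Fin n),
      |singleLayer n σ μ t x| ≤ C) ∧
    ContinuousOn (fun p : ℝ × EuclideanSpace ℝ (Fin n) => singleLayer n σ μ p.1 p.2)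
      (Set.Icc (0 : ℝ) T ×ˢ (Set.univ : Set (EuclideanSpace ℝ (Fin n)))) ∧
    (∀ x : EuclideanSpace ℝ (Fin n), singleLayer n σ μ 0 x = 0) :=
  singleLayer_continuous_everywhere_general n hn T σ μ hμmeas M hμbd c hc hAhlfors
end
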